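/- Under the replicability setup with the directional FWER replicability procedure at level α ∈ (0,1), for every feature j with H_j ∈ {(1,0),(−1,0)} such that P_{2j}^L is independent of the vector of primary-study p-values (P_{11}^L,…,P_{1m}^L), it holds that E(R_j^L + R_j^R) ≤ c₂α·E[ 1{j ∈ R₁}/|R₁| ] + (c₁(α)α/m)·c₂α. -/

import Mathlib

open MeasureTheory ProbabilityTheory Set

section Replicability

variable {Ω : Type} {m : ℕ}

/-- `c₁(x) = (1−c₂)/(1 − l₀₀(1 − c₂x))`. -/
noncomputable def c1 (l00 c2 x : ℝ) : ℝ := (1 - c2) / (1 - l00 * (1 - c2 * x))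

/-- The primary-study one-sided p-value in the direction favoured by the primary study:
`p'₁ⱼ = min(P₁ⱼᴸ, P₁ⱼᴿ)` where `P₁ⱼᴿ = 1 − P₁ⱼᴸ`. -/
noncomputable def p1' (P1L : Fin m → Ω → ℝ) (j : Fin m) (ω : Ω) : ℝ :=
  min (P1L j ω) (1 - P1L j ω)

/-- The follow-up study one-sided p-value in the direction favoured by the primary study:
`p'₂ⱼ = P₂ⱼᴸ` if `P₁ⱼᴸ < P₁ⱼᴿ` and `p'₂ⱼ = P₂ⱼᴿ = 1 − P₂ⱼᴸ` otherwise. -/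
noncomputable def p2' (P1L P2L : Fin m → Ω → ℝ) (j : Fin m) (ω : Ω) : ℝ :=
  if P1L j ω < 1 - P1L j ω then P2L j ω else 1 - P2L j ω

/-- The set `R₁` of features selected for follow-up, a function of the primary-study
left-sided p-values. -/
def R1set (sel : (Fin m → ℝ) → Finset (Fin m)) (P1L : Fin m → Ω → ℝ) (ω : Ω) :
    Finset (Fin m) := sel (fun i => P1L i ω)

/-- A replicability claim is made for feature `j` if `j` is selected, `p'₁ⱼ ≤ a`
and `p'₂ⱼ ≤ b/|R₁|`. -/
def Claim (sel : (Fin m → ℝ) → Finset (Fin m)) (P1L P2L : Fin m → Ω → ℝ)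
    (a b : ℝ) (j : Fin m) (ω : Ω) : Prop :=
  j ∈ R1set sel P1L ω ∧ p1' P1L j ω ≤ a ∧
    p2' P1L P2L j ω ≤ b / ((R1set sel P1L ω).card : ℝ)

open Classical in
/-- Indicator of a left-direction replicability claim for feature `j`. -/
noncomputable def RjL (sel : (Fin m → ℝ) → Finset (Fin m)) (P1L P2L : Fin m → Ω → ℝ)
    (a b : ℝ) (j : Fin m) (ω : Ω) : ℕ :=
  if Claim sel P1L P2L a b j ω ∧ P1L j ω < 1 - P1L j ω then 1 else 0

open Classical in
/-- Indicator of a right-direction replicability claim for feature `j`. -/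
noncomputable def RjR (sel : (Fin m → ℝ) → Finset (Fin m)) (P1L P2L : Fin m → Ω → ℝ)
    (a b : ℝ) (j : Fin m) (ω : Ω) : ℕ :=
  if Claim sel P1L P2L a b j ω ∧ ¬ (P1L j ω < 1 - P1L j ω) then 1 else 0

/-- `R`, the total number of replicability claims. -/
noncomputable def Rtot (sel : (Fin m → ℝ) → Finset (Fin m)) (P1L P2L : Fin m → Ω → ℝ)
    (a b : ℝ) (ω : Ω) : ℕ :=
  ∑ j : Fin m, (RjL sel P1L P2L a b j ω + RjR sel P1L P2L a b j ω)

/-- `S`, the number of true directional replicability claims. -/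
noncomputable def Stot (H1 H2 : Fin m → ℤ) (sel : (Fin m → ℝ) → Finset (Fin m))
    (P1L P2L : Fin m → Ω → ℝ) (a b : ℝ) (ω : Ω) : ℕ :=
  ∑ j ∈ Finset.univ.filter (fun j => H1 j = 1 ∧ H2 j = 1), RjR sel P1L P2L a b j ω +
  ∑ j ∈ Finset.univ.filter (fun j => H1 j = -1 ∧ H2 j = -1), RjL sel P1L P2L a b j ω

end Replicability

/-!
A claim for feature `j` requires `j ∈ R₁` and `p'₂ⱼ ≤ c₂α/|R₁|`. Once the primary-study
p-values are fixed, so are `R₁` and the direction of `p'₂ⱼ`, while by independence `P₂ⱼᴸ` is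
still uniform; in either direction the conditional probability of a claim is therefore at most
`c₂α · 1{j ∈ R₁}/|R₁|`. Averaging over the primary study gives the first term of the bound, and
the second term is nonnegative.
-/

open scoped ENNReal

section Uniform

variable {Ω : Type*} [MeasurableSpace Ω] {μ : Measure Ω} {X : Ω → ℝ}

lemma ofReal_le_measure_lt_of_uniform
    (hunif : ∀ t ∈ Icc (0:ℝ) 1, μ {ω | X ω ≤ t} = ENNReal.ofReal t)
    {s : ℝ} (hs : s ≤ 1) : ENNReal.ofReal s ≤ μ {ω | X ω < s} := by
  refine le_of_forall_lt_imp_le_of_dense fun c hc => ?_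
  have hcs : c.toReal < s := ENNReal.toReal_lt_of_lt_ofReal hc
  calc c = ENNReal.ofReal c.toReal := (ENNReal.ofReal_toReal (ne_top_of_lt hc)).symm
    _ = μ {ω | X ω ≤ c.toReal} := (hunif _ ⟨ENNReal.toReal_nonneg, by linarith⟩).symm
    _ ≤ μ {ω | X ω < s} := measure_mono fun ω (hω : X ω ≤ _) => hω.trans_lt hcs

lemma measure_one_sub_le_le_of_uniform [IsProbabilityMeasure μ] (hX : Measurable X)
    (hunif : ∀ t ∈ Icc (0:ℝ) 1, μ {ω | X ω ≤ t} = ENNReal.ofReal t)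
    {t : ℝ} (ht : t ∈ Icc (0:ℝ) 1) : μ {ω | 1 - X ω ≤ t} ≤ ENNReal.ofReal t := by
  have hcompl : {ω | 1 - X ω ≤ t} = {ω | X ω < 1 - t}ᶜ := by
    ext ω
    change 1 - X ω ≤ t ↔ ¬ X ω < 1 - t
    rw [not_lt]
    constructor <;> intro h <;> linarith
  rw [hcompl, prob_compl_eq_one_sub (measurableSet_lt hX measurable_const)]
  calc 1 - μ {ω | X ω < 1 - t} ≤ ENNReal.ofReal 1 - ENNReal.ofReal (1 - t) := by
        rw [ENNReal.ofReal_one]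
        exact tsub_le_tsub_left (ofReal_le_measure_lt_of_uniform hunif (by linarith [ht.1])) 1
    _ = ENNReal.ofReal t := by
        rw [← ENNReal.ofReal_sub _ (by linarith [ht.2]), sub_sub_cancel]

end Uniform

lemma measure_prodMk_mem_le_lintegral_of_indepFun {Ω α β : Type*} [MeasurableSpace Ω]
    [MeasurableSpace α] [MeasurableSpace β] {μ : Measure Ω} [IsFiniteMeasure μ]
    {X : Ω → α} {Y : Ω → β} (hXY : IndepFun X Y μ) (hX : Measurable X) (hY : Measurable Y)
    {E : Set (α × β)} (hE : MeasurableSet E) {f : β → ℝ≥0∞}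
    (hf : ∀ y, μ {ω | (X ω, y) ∈ E} ≤ f y) :
    μ {ω | (X ω, Y ω) ∈ E} ≤ ∫⁻ ω, f (Y ω) ∂μ :=
  calc μ {ω | (X ω, Y ω) ∈ E} = μ.map (fun ω => (X ω, Y ω)) E :=
        (Measure.map_apply (hX.prodMk hY) hE).symm
    _ = ((μ.map X).prod (μ.map Y)) E := by
        rw [(indepFun_iff_map_prod_eq_prod_map_map hX.aemeasurable hY.aemeasurable).1 hXY]
    _ = ∫⁻ y, μ.map X ((fun x => (x, y)) ⁻¹' E) ∂(μ.map Y) := Measure.prod_apply_symm hE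
    _ ≤ ∫⁻ y, f y ∂(μ.map Y) := lintegral_mono fun y =>
        (Measure.map_apply hX (measurable_prodMk_right hE)).trans_le (hf y)
    _ ≤ ∫⁻ ω, f (Y ω) ∂μ := lintegral_map_le f Y

section FollowUp

variable {m : ℕ} (sel : (Fin m → ℝ) → Finset (Fin m)) (b : ℝ) (j : Fin m)

/-- The pairs `(P₂ⱼᴸ, (P₁ᵢᴸ)ᵢ)` for which `j ∈ R₁` and `p'₂ⱼ ≤ b/|R₁|`. -/
def followUpSet : Set (ℝ × (Fin m → ℝ)) :=
  {q | j ∈ sel q.2 ∧ (if q.2 j < 1 - q.2 j then q.1 else 1 - q.1) ≤ b / ((sel q.2).card : ℝ)}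

/-- `1{j ∈ R₁}/|R₁|` as a function of the primary-study p-values. -/
noncomputable def selWeight : (Fin m → ℝ) → ℝ :=
  {y | j ∈ sel y}.indicator fun y => 1 / ((sel y).card : ℝ)

variable {sel}

lemma measurable_selWeight (selMeas : Measurable[_, ⊤] sel) : Measurable (selWeight sel j) := by
  have hweight : Measurable[⊤] fun S : Finset (Fin m) =>
      {S : Finset (Fin m) | j ∈ S}.indicator (fun S => 1 / (S.card : ℝ)) S :=
    measurable_from_top
  exact hweight.comp selMeas

lemma measurableSet_followUpSet (selMeas : Measurable[_, ⊤] sel) :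
    MeasurableSet (followUpSet sel b j) := by
  have hcard : Measurable[⊤] fun S : Finset (Fin m) => (S.card : ℝ) := measurable_from_top
  have hdir : MeasurableSet {q : ℝ × (Fin m → ℝ) | q.2 j < 1 - q.2 j} :=
    measurableSet_lt ((measurable_pi_apply j).comp measurable_snd)
      (measurable_const.sub ((measurable_pi_apply j).comp measurable_snd))
  have hsel : MeasurableSet {q : ℝ × (Fin m → ℝ) | j ∈ sel q.2} :=
    (selMeas.comp measurable_snd) (MeasurableSpace.measurableSet_top (s := {S | j ∈ S}))
  have hpass : MeasurableSet {q : ℝ × (Fin m → ℝ) |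
      (if q.2 j < 1 - q.2 j then q.1 else 1 - q.1) ≤ b / ((sel q.2).card : ℝ)} :=
    measurableSet_le (measurable_fst.ite hdir (measurable_const.sub measurable_fst))
      (measurable_const.div ((hcard.comp selMeas).comp measurable_snd))
  exact hsel.inter hpass

lemma selWeight_nonneg (y : Fin m → ℝ) : 0 ≤ selWeight sel j y :=
  indicator_nonneg (fun _ _ => by positivity) y

lemma selWeight_le_one (y : Fin m → ℝ) : selWeight sel j y ≤ 1 :=
  indicator_apply_le' (fun hj => div_le_one_of_le₀
    (Nat.one_le_cast.mpr (Finset.card_pos.mpr ⟨j, hj⟩)) (by positivity)) (fun _ => zero_le_one)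

lemma measure_followUpSet_section_le {Ω : Type*} [MeasurableSpace Ω] {μ : Measure Ω}
    [IsProbabilityMeasure μ] {X : Ω → ℝ} (hX : Measurable X)
    (hunif : ∀ t ∈ Icc (0:ℝ) 1, μ {ω | X ω ≤ t} = ENNReal.ofReal t)
    {b : ℝ} (hb : b ∈ Icc (0:ℝ) 1) (y : Fin m → ℝ) :
    μ {ω | (X ω, y) ∈ followUpSet sel b j} ≤ ENNReal.ofReal (b * selWeight sel j y) := by
  by_cases hj : j ∈ sel y
  · have hcard : (1:ℝ) ≤ (sel y).card := Nat.one_le_cast.mpr (Finset.card_pos.mpr ⟨j, hj⟩)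
    have hτ : b / ((sel y).card : ℝ) ∈ Icc (0:ℝ) 1 :=
      ⟨div_nonneg hb.1 (by positivity), div_le_one_of_le₀ (hb.2.trans hcard) (by positivity)⟩
    have hweight : b * selWeight sel j y = b / (sel y).card := by
      rw [selWeight, indicator_of_mem (show y ∈ {y | j ∈ sel y} from hj), mul_one_div]
    rw [hweight]
    by_cases hdir : y j < 1 - y j
    · refine (congrArg μ ?_).trans_le (hunif _ hτ).le
      ext ω
      simp [followUpSet, hj, hdir]
    · refine (congrArg μ ?_).trans_le (measure_one_sub_le_le_of_uniform hX hunif hτ)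
      ext ω
      simp [followUpSet, hj, hdir]
  · simp [followUpSet, hj]

lemma claim_imp_mem_followUpSet {Ω : Type} {P1L P2L : Fin m → Ω → ℝ} {a : ℝ} {ω : Ω}
    (h : Claim sel P1L P2L a b j ω) : (P2L j ω, fun i => P1L i ω) ∈ followUpSet sel b j :=
  ⟨h.1, h.2.2⟩

end FollowUp

lemma RjL_add_RjR {Ω : Type} {m : ℕ} (sel : (Fin m → ℝ) → Finset (Fin m))
    (P1L P2L : Fin m → Ω → ℝ) (a b : ℝ) (j : Fin m) (ω : Ω) :
    (RjL sel P1L P2L a b j ω : ℝ) + RjR sel P1L P2L a b j ω =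
      {ω | Claim sel P1L P2L a b j ω}.indicator 1 ω := by
  by_cases h : Claim sel P1L P2L a b j ω <;> by_cases hdir : P1L j ω < 1 - P1L j ω <;>
    simp [RjL, RjR, h, hdir]

lemma integral_RjL_add_RjR_le {Ω : Type} [MeasurableSpace Ω] {μ : Measure Ω} [IsFiniteMeasure μ]
    {m : ℕ} {sel : (Fin m → ℝ) → Finset (Fin m)} {P1L P2L : Fin m → Ω → ℝ} (a b : ℝ) (j : Fin m)
    (hE : MeasurableSet {ω | (P2L j ω, fun i => P1L i ω) ∈ followUpSet sel b j}) :
    ∫ ω, ((RjL sel P1L P2L a b j ω : ℝ) + (RjR sel P1L P2L a b j ω : ℝ)) ∂μ ≤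
      μ.real {ω | (P2L j ω, fun i => P1L i ω) ∈ followUpSet sel b j} := by
  rw [← integral_indicator_one hE]
  refine integral_mono_of_nonneg (ae_of_all _ fun ω => by positivity)
    ((integrable_const 1).indicator hE) (ae_of_all _ fun ω => ?_)
  exact (RjL_add_RjR sel P1L P2L a b j ω).trans_le <| indicator_le_indicator_of_subset
    (fun ω => claim_imp_mem_followUpSet b j) (fun _ => zero_le_one) ω

lemma measureReal_followUpSet_le {Ω : Type*} [MeasurableSpace Ω] {μ : Measure Ω}
    [IsProbabilityMeasure μ] {m : ℕ} {sel : (Fin m → ℝ) → Finset (Fin m)} {b : ℝ} (j : Fin m)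
    {X : Ω → ℝ} {Y : Ω → Fin m → ℝ} (hX : Measurable X) (hY : Measurable Y)
    (hunif : ∀ t ∈ Icc (0:ℝ) 1, μ {ω | X ω ≤ t} = ENNReal.ofReal t) (hXY : IndepFun X Y μ)
    (selMeas : Measurable[_, ⊤] sel) (hb : b ∈ Icc (0:ℝ) 1) :
    μ.real {ω | (X ω, Y ω) ∈ followUpSet sel b j} ≤ b * ∫ ω, selWeight sel j (Y ω) ∂μ := by
  have hweight : Integrable (fun ω => selWeight sel j (Y ω)) μ :=
    .of_bound ((measurable_selWeight j selMeas).comp hY).aestronglyMeasurable 1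
      (ae_of_all _ fun ω => by
        rw [Real.norm_of_nonneg (selWeight_nonneg j _)]; exact selWeight_le_one j _)
  have hnonneg : 0 ≤ fun ω => b * selWeight sel j (Y ω) :=
    fun ω => mul_nonneg hb.1 (selWeight_nonneg j _)
  rw [← integral_const_mul]
  refine ENNReal.toReal_le_of_le_ofReal (integral_nonneg hnonneg) ?_
  rw [ofReal_integral_eq_lintegral_ofReal (hweight.const_mul b) (ae_of_all _ hnonneg)]
  exact measure_prodMk_mem_le_lintegral_of_indepFun hXY hX hY
    (measurableSet_followUpSet b j selMeas) (measure_followUpSet_section_le j hX hunif hb)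

lemma c1_nonneg {l00 c2 x : ℝ} (hl00 : l00 ∈ Ico (0:ℝ) 1) (hc2 : c2 ≤ 1) (hx : 0 ≤ c2 * x) :
    0 ≤ c1 l00 c2 x := by
  have hden : 0 < 1 - l00 * (1 - c2 * x) := by nlinarith [hl00.1, hl00.2]
  exact div_nonneg (by linarith) hden.le

theorem stmt12_general
    {Ω : Type} [MeasureSpace Ω] [IsProbabilityMeasure (ℙ : Measure Ω)]
    -- the number of features
    (m : ℕ)
    -- the hypothesis configuration H_j = (H1 j, H2 j) ∈ {-1,0,1}²
    (H1 H2 : Fin m → ℤ)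
    -- the left-sided p-values of the two studies (the right-sided ones are 1 - P1L, 1 - P2L)
    (P1L P2L : Fin m → Ω → ℝ)
    (measP1 : ∀ j, Measurable (P1L j)) (measP2 : ∀ j, Measurable (P2L j))
    -- null p-values are uniform
    (unif2 : ∀ j, H2 j = 0 → ∀ t ∈ Icc (0:ℝ) 1, ℙ {ω | P2L j ω ≤ t} = ENNReal.ofReal t)
    -- the selection rule: a measurable, nonempty-set-valued function of the primary p-values
    (sel : (Fin m → ℝ) → Finset (Fin m))
    (selMeas : @Measurable (Fin m → ℝ) (Finset (Fin m)) _ ⊤ sel)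
    -- the parameters l₀₀ ∈ [0,1) and c₂ ∈ (0,1)
    (l00 c2 : ℝ) (hl00 : l00 ∈ Ico (0:ℝ) 1) (hc2 : c2 ∈ Ioo (0:ℝ) 1)
    -- the level of the procedure
    (α : ℝ) (hα : α ∈ Ioo (0:ℝ) 1)
    -- a feature with H_j ∈ {(1,0),(−1,0)} whose follow-up p-value is independent of the
    -- vector of primary-study p-values
    (j : Fin m) (hj : (H1 j = 1 ∨ H1 j = -1) ∧ H2 j = 0)
    (indep : IndepFun (P2L j) (fun ω => fun i => P1L i ω) ℙ) :
    ∫ ω, ((RjL sel P1L P2L (c1 l00 c2 α * α / (m : ℝ)) (c2 * α) j ω : ℝ) +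
        (RjR sel P1L P2L (c1 l00 c2 α * α / (m : ℝ)) (c2 * α) j ω : ℝ)) ∂ℙ ≤
      c2 * α * ∫ ω, ({ω' | j ∈ R1set sel P1L ω'}.indicator
          (fun ω' => 1 / ((R1set sel P1L ω').card : ℝ)) ω) ∂ℙ +
        (c1 l00 c2 α * α / (m : ℝ)) * (c2 * α) := by
  have hb : c2 * α ∈ Icc (0:ℝ) 1 :=
    ⟨mul_nonneg hc2.1.le hα.1.le, by nlinarith [hc2.2, hα.1, hα.2]⟩
  have ha : 0 ≤ c1 l00 c2 α * α / m :=
    div_nonneg (mul_nonneg (c1_nonneg hl00 hc2.2.le hb.1) hα.1.le) m.cast_nonneg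
  have hY : Measurable fun ω i => P1L i ω := measurable_pi_lambda _ measP1
  calc _ ≤ (ℙ : Measure Ω).real {ω | (P2L j ω, fun i => P1L i ω) ∈ followUpSet sel (c2 * α) j} :=
        integral_RjL_add_RjR_le _ _ j
          ((measP2 j).prodMk hY (measurableSet_followUpSet _ j selMeas))
    _ ≤ c2 * α * ∫ ω, selWeight sel j (fun i => P1L i ω) ∂ℙ :=
        measureReal_followUpSet_le j (measP2 j) hY (unif2 j hj.2) indep selMeas hb
    _ ≤ _ := le_add_of_nonneg_right (mul_nonneg ha hb.1)

/-- For a feature `j` with `H_j ∈ {(1,0),(−1,0)}` whose follow-up p-value is independent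
of the primary-study p-values, the expected number of replicability claims of the
level-`α` directional FWER replicability procedure is at most
`c₂α·E[1{j ∈ R₁}/|R₁|] + (c₁(α)α/m)·c₂α`. -/
theorem stmt12
    {Ω : Type} [MeasureSpace Ω] [IsProbabilityMeasure (ℙ : Measure Ω)]
    -- the number of features
    (m : ℕ) (hm : 1 ≤ m)
    -- the hypothesis configuration H_j = (H1 j, H2 j) ∈ {-1,0,1}²
    (H1 H2 : Fin m → ℤ)
    (hH1 : ∀ j, H1 j = -1 ∨ H1 j = 0 ∨ H1 j = 1)
    (hH2 : ∀ j, H2 j = -1 ∨ H2 j = 0 ∨ H2 j = 1)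
    -- the left-sided p-values of the two studies (the right-sided ones are 1 - P1L, 1 - P2L)
    (P1L P2L : Fin m → Ω → ℝ)
    (measP1 : ∀ j, Measurable (P1L j)) (measP2 : ∀ j, Measurable (P2L j))
    (range1 : ∀ j ω, P1L j ω ∈ Icc (0:ℝ) 1) (range2 : ∀ j ω, P2L j ω ∈ Icc (0:ℝ) 1)
    (neHalf : ∀ j, ∀ᵐ ω ∂ℙ, P1L j ω ≠ 1/2)
    -- null p-values are uniform
    (unif1 : ∀ j, H1 j = 0 → ∀ t ∈ Icc (0:ℝ) 1, ℙ {ω | P1L j ω ≤ t} = ENNReal.ofReal t)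
    (unif2 : ∀ j, H2 j = 0 → ∀ t ∈ Icc (0:ℝ) 1, ℙ {ω | P2L j ω ≤ t} = ENNReal.ofReal t)
    -- under a true right-sided (resp. left-sided) alternative, the left-sided (resp.
    -- right-sided) p-value is stochastically larger than or equal to uniform
    (stoch1R : ∀ j, H1 j = 1 → ∀ t ∈ Icc (0:ℝ) 1, ℙ {ω | P1L j ω ≤ t} ≤ ENNReal.ofReal t)
    (stoch2R : ∀ j, H2 j = 1 → ∀ t ∈ Icc (0:ℝ) 1, ℙ {ω | P2L j ω ≤ t} ≤ ENNReal.ofReal t)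
    (stoch1L : ∀ j, H1 j = -1 →
      ∀ t ∈ Icc (0:ℝ) 1, ℙ {ω | 1 - P1L j ω ≤ t} ≤ ENNReal.ofReal t)
    (stoch2L : ∀ j, H2 j = -1 →
      ∀ t ∈ Icc (0:ℝ) 1, ℙ {ω | 1 - P2L j ω ≤ t} ≤ ENNReal.ofReal t)
    -- the selection rule: a measurable, nonempty-set-valued function of the primary p-values
    (sel : (Fin m → ℝ) → Finset (Fin m))
    (selMeas : @Measurable (Fin m → ℝ) (Finset (Fin m)) _ ⊤ sel)
    (selNonempty : ∀ p, (sel p).Nonempty)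
    -- the parameters l₀₀ ∈ [0,1) and c₂ ∈ (0,1)
    (l00 c2 : ℝ) (hl00 : l00 ∈ Ico (0:ℝ) 1) (hc2 : c2 ∈ Ioo (0:ℝ) 1)
    -- the level of the procedure
    (α : ℝ) (hα : α ∈ Ioo (0:ℝ) 1)
    -- a feature with H_j ∈ {(1,0),(−1,0)} whose follow-up p-value is independent of the
    -- vector of primary-study p-values
    (j : Fin m) (hj : (H1 j = 1 ∨ H1 j = -1) ∧ H2 j = 0)
    (indep : IndepFun (P2L j) (fun ω => fun i => P1L i ω) ℙ) :
    ∫ ω, ((RjL sel P1L P2L (c1 l00 c2 α * α / (m : ℝ)) (c2 * α) j ω : ℝ) +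
        (RjR sel P1L P2L (c1 l00 c2 α * α / (m : ℝ)) (c2 * α) j ω : ℝ)) ∂ℙ ≤
      c2 * α * ∫ ω, ({ω' | j ∈ R1set sel P1L ω'}.indicator
          (fun ω' => 1 / ((R1set sel P1L ω').card : ℝ)) ω) ∂ℙ +
        (c1 l00 c2 α * α / (m : ℝ)) * (c2 * α) :=
  stmt12_general m H1 H2 P1L P2L measP1 measP2 unif2 sel selMeas l00 c2 hl00 hc2 α hα j hj indep
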